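/- arXiv:2605.30799 — 2 statements merged into one kernel-verified Lean document; each statement's English description precedes it below -/
import Mathlib

section
/- There exists a subset S of the dihedral group of order 16, with 1 ∉ S and S closed under inverses, such that the Cayley graph Cay(D(16), S) is isomorphic to the Möbius–Kantor graph MK. -/
/-- The underlying relation of the Möbius–Kantor graph `GP(8,3)`. -/
def mkRel (v w : ZMod 8 × Fin 2) : Bool :=
  (v.2 == 0 && w.2 == 0 && (w.1 == v.1 + 1 || v.1 == w.1 + 1)) ||
  ((v.2 == 0 && w.2 == 1 || v.2 == 1 && w.2 == 0) && v.1 == w.1) ||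
  (v.2 == 1 && w.2 == 1 && (w.1 == v.1 + 3 || v.1 == w.1 + 3))

/-- The Möbius–Kantor graph, i.e. the generalized Petersen graph `GP(8,3)`. -/
def MK : SimpleGraph (ZMod 8 × Fin 2) where
  Adj v w := mkRel v w = true
  symm := ⟨by intro v w; revert v w; decide⟩
  loopless := ⟨by intro v; revert v; decide⟩

/-- The Cayley graph of a group `G` with respect to a connection set `S`
not containing `1` and closed under inverses. -/
def cayleyGraph {G : Type*} [Group G] (S : Set G)
    (h1 : (1 : G) ∉ S) (hinv : ∀ s ∈ S, s⁻¹ ∈ S) : SimpleGraph G where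
  Adj x y := x⁻¹ * y ∈ S
  symm := ⟨by
    intro x y h
    have := hinv _ h
    simpa [_root_.mul_inv_rev] using this⟩
  loopless := ⟨by
    intro x h
    simp only [inv_mul_cancel] at h
    exact h1 h⟩

/-!
A Cayley graph of `D(2n)` whose connection set consists of reflections `s rᵃ`, `a ∈ A`, is
bipartite between rotations and reflections, with `rⁱ` adjacent to `s rʲ` exactly when `i + j ∈ A`
(in Mathlib's convention); relabelling `rⁱ` as `-i`, it is the Haar graph `H(ℤ/n, A)`.
The Möbius–Kantor graph is the Haar graph of `{0, 1, 3} ⊆ ℤ/8`, i.e. the Levi graph of the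
Möbius–Kantor configuration.
-/

def haarGraph {n : ℕ} (A : Set (ZMod n)) : SimpleGraph (ZMod n ⊕ ZMod n) where
  Adj
    | .inl i, .inr j | .inr j, .inl i => j - i ∈ A
    | _, _ => False
  symm := ⟨by rintro (i | i) (j | j) h <;> exact h⟩
  loopless := ⟨by rintro (i | i) h <;> exact h⟩

instance {n : ℕ} (A : Set (ZMod n)) [DecidablePred (· ∈ A)] : DecidableRel (haarGraph A).Adj
  | .inl i, .inr j | .inr j, .inl i => inferInstanceAs (Decidable (j - i ∈ A))
  | .inl _, .inl _ | .inr _, .inr _ => inferInstanceAs (Decidable False)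

namespace DihedralGroup

variable {n : ℕ}

lemma one_notMem_image_sr (A : Set (ZMod n)) : (1 : DihedralGroup n) ∉ sr '' A := by
  simp [one_def, -r_zero]

lemma inv_mem_image_sr (A : Set (ZMod n)) : ∀ s ∈ sr '' A, s⁻¹ ∈ sr '' A := by
  rintro _ ⟨a, ha, rfl⟩
  exact ⟨a, ha, (inv_sr a).symm⟩

def cayleyGraphImageSrIsoHaarGraph (A : Set (ZMod n)) :
    cayleyGraph (sr '' A) (one_notMem_image_sr A) (inv_mem_image_sr A) ≃g haarGraph A where
  toEquiv := equivSum.trans ((Equiv.neg _).sumCongr (Equiv.refl _))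
  map_rel_iff' {x y} := by
    rcases x with i | i <;> rcases y with j | j <;>
      simp [cayleyGraph, haarGraph, equivSum, add_comm]

end DihedralGroup

open DihedralGroup

instance : DecidableRel MK.Adj := fun v w => inferInstanceAs (Decidable (mkRel v w = true))

/-- The colour classes of `MK` are `(even, 0) ∪ (odd, 1)` and `(odd, 0) ∪ (even, 1)`; these are
the images of the left and of the right copy of `ℤ/8`. -/
def haarToMK : ZMod 8 ⊕ ZMod 8 → ZMod 8 × Fin 2
  | .inl i => if i.val % 2 = 0 then (i + 2, 0) else (i, 1)
  | .inr j => if j.val % 2 = 0 then (j + 2, 1) else (j, 0)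

noncomputable def haarGraphIsoMK : haarGraph ({0, 1, 3} : Set (ZMod 8)) ≃g MK where
  toEquiv := Equiv.ofBijective haarToMK (by decide)
  map_rel_iff' {x y} := by revert x y; decide

/-- The Möbius–Kantor graph is a Cayley graph of the dihedral group of order 16. -/
theorem moebiusKantor_cayley_dihedral :
    ∃ (S : Set (DihedralGroup 8)) (h1 : (1 : DihedralGroup 8) ∉ S)
      (hinv : ∀ s ∈ S, s⁻¹ ∈ S),
      Nonempty (cayleyGraph S h1 hinv ≃g MK) :=
  ⟨sr '' {0, 1, 3}, one_notMem_image_sr _, inv_mem_image_sr _,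
    ⟨(cayleyGraphImageSrIsoHaarGraph _).trans haarGraphIsoMK⟩⟩
end

section
/- Let G be a finite simple graph on n vertices, let λ₁ ≤ λ₂ ≤ … ≤ λₙ be the eigenvalues of its Kirchhoff Laplacian arranged in increasing order, and let d₁ ≤ d₂ ≤ … ≤ dₙ be the vertex degrees arranged in increasing order, with the convention d₀ = 0. Then λₖ ≤ dₖ + dₖ₋₁ for every k with 1 ≤ k ≤ n. -/
open Polynomial

/-!
Let `S` be the set of the `k` vertices of smallest degree and `w` the degree function on `S`,
extended by `0` outside `S`. For `x` supported on `S`, the weighted Cauchy–Schwarz inequality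
`(x u - x v)² ≤ (w u + w v) (x u² / w u + x v² / w v)` on every edge bounds the Laplacian
quadratic form by `c ‖x‖²`, where `c ≥ w u + w v` for all edges `uv` (an Anderson–Morley argument
localised to `S`). Two distinct vertices of `S` have degrees at most `d k` and `d (k - 1)`, so
`c = d k + d (k - 1)` works. By the min–max principle, a `k`-dimensional space on which the
Rayleigh quotient is at most `c` forces at least `k` eigenvalues `≤ c`, whence `λ k ≤ c`.
-/

open Finset Matrix
open scoped RealInnerProductSpace

theorem sub_sq_le_add_mul_div_add_div {a b p q : ℝ} (hp : 0 ≤ p) (hq : 0 ≤ q)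
    (ha : p = 0 → a = 0) (hb : q = 0 → b = 0) :
    (a - b) ^ 2 ≤ (p + q) * (a ^ 2 / p + b ^ 2 / q) := by
  rcases hp.eq_or_lt with rfl | hp
  · rcases hq.eq_or_lt with rfl | hq
    · simp [ha rfl, hb rfl]
    · simp [ha rfl, mul_div_cancel₀ _ hq.ne']
  rcases hq.eq_or_lt with rfl | hq
  · simp [hb rfl, mul_div_cancel₀ _ hp.ne']
  rw [div_add_div _ _ hp.ne' hq.ne', mul_div_assoc', le_div_iff₀ (by positivity)]
  nlinarith [sq_nonneg (a * q + b * p)]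

namespace MonotoneOn

variable {f : ℕ → ℝ} {n k : ℕ}

theorem add_apply_succ_le (hf : MonotoneOn f (Set.Icc 1 n)) {i j : ℕ} (hij : i ≠ j)
    (hi : i < k) (hj : j < k) (hk : k ≤ n) :
    f (i + 1) + f (j + 1) ≤ f k + f (k - 1) := by
  have hmono : ∀ a b, 1 ≤ a → a ≤ b → b ≤ n → f a ≤ f b := fun a b ha hab hb =>
    hf ⟨ha, hab.trans hb⟩ ⟨ha.trans hab, hb⟩ hab
  rcases hij.lt_or_gt with h | h
  · linarith [hmono (i + 1) (k - 1) (by omega) (by omega) (by omega),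
      hmono (j + 1) k (by omega) (by omega) hk]
  · linarith [hmono (j + 1) (k - 1) (by omega) (by omega) (by omega),
      hmono (i + 1) k (by omega) (by omega) hk]

theorem le_of_le_card_filter_le (hf : MonotoneOn f (Set.Icc 1 n)) (hk1 : 1 ≤ k) (hkn : k ≤ n)
    {c : ℝ} (hcard : k ≤ #{j ∈ Icc 1 n | f j ≤ c}) : f k ≤ c := by
  by_contra! hc
  have hsub : {j ∈ Icc 1 n | f j ≤ c} ⊆ Ico 1 k := fun j hj => by
    rw [mem_filter, mem_Icc] at hj
    by_contra hjk
    have hkj : k ≤ j := by rw [mem_Ico] at hjk; omega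
    exact (hc.trans_le (hf ⟨hk1, hkn⟩ ⟨hk1.trans hkj, hj.1.2⟩ hkj)).not_ge hj.2
  have := card_le_card hsub
  rw [Nat.card_Ico] at this
  omega

end MonotoneOn

namespace LinearMap.IsSymmetric

variable {E : Type*} [NormedAddCommGroup E] [InnerProductSpace ℝ E] [FiniteDimensional ℝ E]
  {T : E →ₗ[ℝ] E} {n : ℕ}

theorem inner_apply_self_eq_sum (hT : T.IsSymmetric) (hn : Module.finrank ℝ E = n) (x : E) :
    ⟪T x, x⟫ = ∑ i, hT.eigenvalues hn i * ⟪hT.eigenvectorBasis hn i, x⟫ ^ 2 := by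
  rw [← (hT.eigenvectorBasis hn).sum_inner_mul_inner]
  refine sum_congr rfl fun i _ => ?_
  rw [hT, apply_eigenvectorBasis, real_inner_smul_right, real_inner_comm x]
  simp only [RCLike.ofReal_real_eq_id, id_eq]
  ring

theorem eq_zero_of_inner_apply_self_le (hT : T.IsSymmetric) (hn : Module.finrank ℝ E = n)
    {c : ℝ} {x : E} (hx : ⟪T x, x⟫ ≤ c * ‖x‖ ^ 2)
    (h : ∀ i, hT.eigenvalues hn i ≤ c → ⟪hT.eigenvectorBasis hn i, x⟫ = 0) : x = 0 := by
  set b := hT.eigenvectorBasis hn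
  have hterm : ∀ i, 0 ≤ (hT.eigenvalues hn i - c) * ⟪b i, x⟫ ^ 2 := fun i => by
    rcases le_or_gt (hT.eigenvalues hn i) c with hi | hi
    · simp [h i hi]
    · exact mul_nonneg (sub_pos.2 hi).le (sq_nonneg _)
  have hsum : ∑ i, (hT.eigenvalues hn i - c) * ⟪b i, x⟫ ^ 2 = ⟪T x, x⟫ - c * ‖x‖ ^ 2 := by
    rw [hT.inner_apply_self_eq_sum hn, ← b.sum_sq_inner_right x, mul_sum, ← sum_sub_distrib]
    exact sum_congr rfl fun i _ => by ring
  have hzero : ∀ i, ⟪b i, x⟫ = 0 := fun i => by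
    rcases le_or_gt (hT.eigenvalues hn i) c with hi | hi
    · exact h i hi
    · have := (sum_eq_zero_iff_of_nonneg fun i _ => hterm i).1
        (le_antisymm (by linarith) (sum_nonneg fun i _ => hterm i)) i (mem_univ i)
      simpa [(sub_pos.2 hi).ne'] using this
  simpa [hzero] using (b.sum_sq_inner_right x).symm

theorem finrank_le_card_eigenvalues_le (hT : T.IsSymmetric) (hn : Module.finrank ℝ E = n)
    (U : Submodule ℝ E) (c : ℝ) (hU : ∀ x ∈ U, ⟪T x, x⟫ ≤ c * ‖x‖ ^ 2) :
    Module.finrank ℝ U ≤ #{i | hT.eigenvalues hn i ≤ c} := by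
  let P : U →ₗ[ℝ] ({i // hT.eigenvalues hn i ≤ c} → ℝ) :=
    LinearMap.pi fun i => (innerₛₗ ℝ (hT.eigenvectorBasis hn i)).comp U.subtype
  have hP : Function.Injective P := by
    refine (injective_iff_map_eq_zero P).2 fun x hx => Subtype.ext ?_
    exact hT.eq_zero_of_inner_apply_self_le hn (hU x x.2) fun i hi => congrFun hx ⟨i, hi⟩
  calc Module.finrank ℝ U ≤ Module.finrank ℝ ({i // hT.eigenvalues hn i ≤ c} → ℝ) :=
        LinearMap.finrank_le_finrank_of_injective hP
    _ = #{i | hT.eigenvalues hn i ≤ c} := by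
        rw [Module.finrank_fintype_fun_eq_card, Fintype.card_subtype]

theorem finrank_le_countP_roots_charpoly (hT : T.IsSymmetric) (U : Submodule ℝ E) (c : ℝ)
    (hU : ∀ x ∈ U, ⟪T x, x⟫ ≤ c * ‖x‖ ^ 2) :
    Module.finrank ℝ U ≤ T.charpoly.roots.countP (· ≤ c) := by
  rw [hT.roots_charpoly_eq_eigenvalues rfl, Multiset.countP_map]
  simpa [Finset.card, Finset.filter_val] using hT.finrank_le_card_eigenvalues_le rfl U c hU

end LinearMap.IsSymmetric

theorem Matrix.IsHermitian.finrank_le_countP_roots_charpoly {ι : Type*} [Fintype ι]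
    [DecidableEq ι] {A : Matrix ι ι ℝ} (hA : A.IsHermitian) (U : Submodule ℝ (ι → ℝ)) (c : ℝ)
    (hU : ∀ x ∈ U, x ⬝ᵥ (A *ᵥ x) ≤ c * (x ⬝ᵥ x)) :
    Module.finrank ℝ U ≤ A.charpoly.roots.countP (· ≤ c) := by
  have hchar : (toEuclideanLin A).charpoly = A.charpoly :=
    ((WithLp.linearEquiv 2 ℝ (ι → ℝ)).symm.charpoly_conj (toLin' A)).trans (charpoly_toLin' A)
  rw [← hchar, ← (WithLp.linearEquiv 2 ℝ (ι → ℝ)).symm.finrank_map_eq U]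
  refine (isSymmetric_toEuclideanLin_iff.2 hA).finrank_le_countP_roots_charpoly _ c ?_
  rintro _ ⟨x, hx, rfl⟩
  rw [← real_inner_self_eq_norm_sq, EuclideanSpace.inner_eq_star_dotProduct,
    EuclideanSpace.inner_eq_star_dotProduct]
  simpa [dotProduct_comm] using hU x hx

namespace SimpleGraph

variable {V : Type*} [Fintype V] (G : SimpleGraph V) [DecidableRel G.Adj]

theorem sum_sum_adj_add (f : V → ℝ) :
    ∑ u, ∑ v, (if G.Adj u v then f u + f v else 0) = 2 * ∑ u, G.degree u * f u := by
  have hleft : ∑ u, ∑ v, (if G.Adj u v then f u else 0) = ∑ u, G.degree u * f u := by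
    refine sum_congr rfl fun u _ => ?_
    rw [degree_eq_sum_if_adj, sum_mul]
    simp only [ite_mul, one_mul, zero_mul]
  have hright : ∑ u, ∑ v, (if G.Adj u v then f v else 0) = ∑ u, G.degree u * f u := by
    rw [sum_comm, ← hleft]
    simp only [G.adj_comm]
  simp only [ite_add_zero, sum_add_distrib, hleft, hright, two_mul]

section DegreeSequence

variable {n : ℕ} {d : ℕ → ℝ} (e : V ≃ Fin n) (he : ∀ v, (G.degree v : ℝ) = d (e v + 1))
include he

theorem nonneg_of_degree_eq (hd0 : d 0 = 0) {j : ℕ} (hj : j ≤ n) : 0 ≤ d j := by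
  rcases Nat.eq_zero_or_pos j with rfl | hj0
  · exact hd0.ge
  · have := he (e.symm ⟨j - 1, by omega⟩)
    rw [Equiv.apply_symm_apply, Nat.sub_add_cancel hj0] at this
    exact this ▸ Nat.cast_nonneg _

theorem indicator_degree_add_le (hd : MonotoneOn d (Set.Icc 1 n)) (hd0 : d 0 = 0) {k : ℕ}
    (hk : k ≤ n) {u v : V} (huv : G.Adj u v) :
    ({w | (e w : ℕ) < k} : Set V).indicator (fun w => (G.degree w : ℝ)) u +
      ({w | (e w : ℕ) < k} : Set V).indicator (fun w => (G.degree w : ℝ)) v ≤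
        d k + d (k - 1) := by
  have hdk : 0 ≤ d k := G.nonneg_of_degree_eq e he hd0 hk
  have hdk1 : 0 ≤ d (k - 1) := G.nonneg_of_degree_eq e he hd0 (by omega)
  have hle : ∀ w, (e w : ℕ) < k → (G.degree w : ℝ) ≤ d k := fun w hw => by
    rw [he w]
    exact hd ⟨by omega, by omega⟩ ⟨by omega, hk⟩ (by omega)
  simp only [Set.indicator_apply, Set.mem_ofPred_eq]
  split_ifs with hu hv hv
  · rw [he u, he v]
    exact hd.add_apply_succ_le (fun h => G.ne_of_adj huv (e.injective (Fin.ext h))) hu hv hk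
  · linarith [hle u hu]
  · linarith [hle v hv]
  · linarith

end DegreeSequence

variable [DecidableEq V]

theorem dotProduct_lapMatrix_mulVec_le {w : V → ℝ} {c : ℝ} (hw : 0 ≤ w) (hc : 0 ≤ c)
    (hwc : ∀ u v, G.Adj u v → w u + w v ≤ c) {x : V → ℝ}
    (hxw : ∀ v, x v ≠ 0 → w v = G.degree v) :
    x ⬝ᵥ (G.lapMatrix ℝ *ᵥ x) ≤ c * (x ⬝ᵥ x) := by
  -- `p v` is the junk value `0` where `w v = 0`; on an edge this forces `x v = 0`.
  set p : V → ℝ := fun v => x v ^ 2 / w v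
  have hp : ∀ v, 0 ≤ p v := fun v => div_nonneg (sq_nonneg _) (hw v)
  have hx_of_adj : ∀ u v, G.Adj u v → w u = 0 → x u = 0 := fun u v huv hu => by
    by_contra hxu
    have := (G.degree_pos_iff_exists_adj u).2 ⟨v, huv⟩
    rw [hxw u hxu] at hu
    exact this.ne' (by exact_mod_cast hu)
  have hedge : ∀ u v, G.Adj u v → (x u - x v) ^ 2 ≤ c * (p u + p v) := fun u v huv =>
    (sub_sq_le_add_mul_div_add_div (hw u) (hw v) (hx_of_adj u v huv)
      (hx_of_adj v u huv.symm)).trans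
      (mul_le_mul_of_nonneg_right (hwc u v huv) (add_nonneg (hp u) (hp v)))
  have hdeg : ∀ v, G.degree v * p v ≤ x v ^ 2 := fun v => by
    by_cases hxv : x v = 0
    · simp [p, hxv]
    · rcases eq_or_ne (G.degree v : ℝ) 0 with h0 | h0
      · simp [h0, sq_nonneg]
      · rw [← mul_div_assoc, hxw v hxv, mul_div_cancel_left₀ _ h0]
  rw [← toLinearMap₂'_apply', lapMatrix_toLinearMap₂']
  calc (∑ u, ∑ v, if G.Adj u v then (x u - x v) ^ 2 else 0) / 2
      ≤ (∑ u, ∑ v, if G.Adj u v then c * (p u + p v) else 0) / 2 := by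
        gcongr with u _ v _
        split_ifs with huv
        · exact hedge u v huv
        · rfl
    _ = c * ∑ v, G.degree v * p v := by
        simp only [← mul_ite_zero, ← mul_sum, sum_sum_adj_add]; ring
    _ ≤ c * ∑ v, x v ^ 2 := by gcongr with v; exact hdeg v
    _ = c * (x ⬝ᵥ x) := by simp only [dotProduct, sq]

theorem card_le_countP_roots_charpoly_lapMatrix (S : Finset V) {c : ℝ} (hc : 0 ≤ c)
    (hSc : ∀ u v, G.Adj u v → (S : Set V).indicator (fun v => (G.degree v : ℝ)) u +
      (S : Set V).indicator (fun v => (G.degree v : ℝ)) v ≤ c) :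
    #S ≤ (G.lapMatrix ℝ).charpoly.roots.countP (· ≤ c) := by
  let U : Submodule ℝ (V → ℝ) := ⨅ v ∈ (S : Set V)ᶜ, LinearMap.ker (LinearMap.proj v)
  have hU : Module.finrank ℝ U = #S := by
    rw [(LinearMap.iInfKerProjEquiv ℝ (fun _ => ℝ) disjoint_compl_right (by simp)).finrank_eq]
    simp
  rw [← hU]
  refine (isHermitian_lapMatrix ℝ G).finrank_le_countP_roots_charpoly U c fun x hx => ?_
  have hxS : ∀ v ∉ S, x v = 0 := by simpa [U] using hx
  refine G.dotProduct_lapMatrix_mulVec_le (fun v => Set.indicator_nonneg (by simp) v) hc hSc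
    fun v hv => Set.indicator_of_mem ?_ _
  by_contra hvS
  exact hv (hxS v hvS)

end SimpleGraph

theorem laplacian_eigenvalue_le_degree_sum_general
    {V : Type*} [Fintype V] [DecidableEq V] (G : SimpleGraph V) [DecidableRel G.Adj]
    (n : ℕ)
    (lam : ℕ → ℝ)
    (hlam_mono : ∀ i j, 1 ≤ i → i ≤ j → j ≤ n → lam i ≤ lam j)
    (hlam : (G.lapMatrix ℝ).charpoly = ∏ k ∈ Finset.Icc 1 n, (X - C (lam k)))
    (d : ℕ → ℝ)
    (hd0 : d 0 = 0)
    (hd_mono : ∀ i j, 1 ≤ i → i ≤ j → j ≤ n → d i ≤ d j)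
    (hd : ∃ e : V ≃ Fin n, ∀ v : V, (G.degree v : ℝ) = d ((e v : ℕ) + 1))
    (k : ℕ) (hk1 : 1 ≤ k) (hkn : k ≤ n) :
    lam k ≤ d k + d (k - 1) := by
  obtain ⟨e, he⟩ := hd
  have hd_mono' : MonotoneOn d (Set.Icc 1 n) := fun i hi j hj hij => hd_mono i j hi.1 hij hj.2
  have hlam_mono' : MonotoneOn lam (Set.Icc 1 n) := fun i hi j hj hij =>
    hlam_mono i j hi.1 hij hj.2
  let S : Finset V := {v | (e v : ℕ) < k}
  have hS : #S = k := by
    rw [card_equiv e (t := ({i | (i : ℕ) < k} : Finset (Fin n))) (by simp [S]),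
      Fin.card_filter_val_lt]
    omega
  have hc : 0 ≤ d k + d (k - 1) :=
    add_nonneg (G.nonneg_of_degree_eq e he hd0 hkn) (G.nonneg_of_degree_eq e he hd0 (by omega))
  have hcount := G.card_le_countP_roots_charpoly_lapMatrix S hc fun u v huv => by
    simpa [S] using G.indicator_degree_add_le e he hd_mono' hd0 hkn huv
  have hroots : (G.lapMatrix ℝ).charpoly.roots = (Icc 1 n).val.map lam := by
    simpa [hlam, Multiset.map_map, Function.comp_def] using
      roots_multiset_prod_X_sub_C ((Icc 1 n).val.map lam)
  rw [hS, hroots, Multiset.countP_map] at hcount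
  exact hlam_mono'.le_of_le_card_filter_le hk1 hkn hcount

/-- **Spectral bound for the Kirchhoff Laplacian.**  If `lam 1 ≤ … ≤ lam n` are the
eigenvalues of the Kirchhoff Laplacian of a finite simple graph `G` on `n` vertices
(listed with multiplicity, so that the characteristic polynomial is
`∏ k in Icc 1 n, (X - C (lam k))`), and `d 1 ≤ … ≤ d n` are the vertex degrees in
increasing order, with the convention `d 0 = 0`, then `lam k ≤ d k + d (k-1)` for all
`1 ≤ k ≤ n`. -/
theorem laplacian_eigenvalue_le_degree_sum
    {V : Type*} [Fintype V] [DecidableEq V] (G : SimpleGraph V) [DecidableRel G.Adj]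
    (n : ℕ) (hn : n = Fintype.card V)
    (lam : ℕ → ℝ)
    (hlam_mono : ∀ i j, 1 ≤ i → i ≤ j → j ≤ n → lam i ≤ lam j)
    (hlam : (G.lapMatrix ℝ).charpoly = ∏ k ∈ Finset.Icc 1 n, (X - C (lam k)))
    (d : ℕ → ℝ)
    (hd0 : d 0 = 0)
    (hd_mono : ∀ i j, 1 ≤ i → i ≤ j → j ≤ n → d i ≤ d j)
    (hd : ∃ e : V ≃ Fin n, ∀ v : V, (G.degree v : ℝ) = d ((e v : ℕ) + 1))
    (k : ℕ) (hk1 : 1 ≤ k) (hkn : k ≤ n) :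
    lam k ≤ d k + d (k - 1) :=
  laplacian_eigenvalue_le_degree_sum_general G n lam hlam_mono hlam d hd0 hd_mono hd k hk1 hkn
end
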